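/- Let R be a commutative ring, q ∈ R, and (A, σ_A) a twisted commutative R-algebra with y ∈ A satisfying σ_A(y) = qy. Let σ be the unique σ_A-semilinear ring endomorphism of A[ξ] with σ(ξ) = ξ + y. Then for every n ∈ ℕ, σ(ξ^{(n)}) = Σ_{i=0}^{n} (i)_q! (n choose i)_q y^i ξ^{(n−i)}, where ξ^{(n)} := ∏_{i=0}^{n−1}(ξ + (i)_q y). -/
import Mathlib

open Polynomial

def qInt {R : Type*} [CommRing R] (q : R) (m : ℕ) : R := ∑ i ∈ Finset.range m, q ^ i

def qFact {R : Type*} [CommRing R] (q : R) : ℕ → R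
  | 0 => 1
  | n + 1 => qFact q n * qInt q (n + 1)

def qChoose {R : Type*} [CommRing R] (q : R) : ℕ → ℕ → R
  | _, 0 => 1
  | 0, _ + 1 => 0
  | n + 1, k + 1 => qChoose q n k + q ^ (k + 1) * qChoose q n (k + 1)

noncomputable def twistedPow {A : Type*} [CommRing A] (q y : A) (n : ℕ) : Polynomial A :=
  ∏ i ∈ Finset.range n, (Polynomial.X + Polynomial.C (qInt q i * y))

section Aux
variable {A : Type*} [CommRing A]

lemma qInt_succ (q : A) (n : ℕ) : qInt q (n + 1) = q * qInt q n + 1 := by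
  simp [qInt, geom_sum_succ]

lemma qInt_add (q : A) (a b : ℕ) : qInt q (a + b) = qInt q a + q ^ a * qInt q b := by
  induction b with
  | zero => simp [qInt]
  | succ b ih =>
    have hb : qInt q (b + 1) = qInt q b + q ^ b := by
      rw [qInt, Finset.sum_range_succ, ← qInt]
    rw [← Nat.add_assoc, hb, qInt, Finset.sum_range_succ, ← qInt, ih, pow_add]
    ring

lemma qChoose_zero_right (q : A) (n : ℕ) : qChoose q n 0 = 1 := by cases n <;> rfl

lemma qChoose_eq_zero (q : A) {n k : ℕ} (h : n < k) : qChoose q n k = 0 := by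
  induction n generalizing k with
  | zero => obtain ⟨k, rfl⟩ := Nat.exists_eq_add_of_lt h; rfl
  | succ n ih =>
    obtain ⟨k, rfl⟩ : ∃ m, k = m + 1 := ⟨k - 1, by omega⟩
    rw [qChoose, ih (by omega), ih (by omega), mul_zero, add_zero]

lemma qChoose_one (q : A) (n : ℕ) : qChoose q n 1 = qInt q n := by
  induction n with
  | zero => simp [qChoose, qInt]
  | succ n ih => rw [qChoose, qChoose_zero_right, ih, qInt_succ]; ring

lemma qChoose_pascal' (q : A) (n k : ℕ) :
    qChoose q (n + 1) (k + 1) = q ^ (n - k) * qChoose q n k + qChoose q n (k + 1) := by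
  induction n generalizing k with
  | zero =>
    cases k with
    | zero => simp [qChoose]
    | succ k => simp [qChoose, qChoose_eq_zero q (by omega : 0 < k + 1)]
  | succ n ih =>
    cases k with
    | zero =>
      rw [qChoose_one, qChoose_one, qChoose_zero_right]
      rw [show (n+1+1 : ℕ) = (n+1)+1 from rfl, qInt_add q (n+1) 1]
      simp [qInt]
      ring
    | succ k =>
      conv_rhs => rw [show qChoose q (n+1) (k+1) = qChoose q n k + q ^ (k+1) * qChoose q n (k+1) from rfl,
        show qChoose q (n+1) (k+1+1) = qChoose q n (k+1) + q ^ (k+1+1) * qChoose q n (k+1+1) from rfl]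
      rw [show qChoose q (n+1+1) (k+1+1) = qChoose q (n+1) (k+1) + q ^ (k+1+1) * qChoose q (n+1) (k+1+1) from rfl,
        ih k, ih (k+1), Nat.succ_sub_succ]
      rcases Nat.lt_or_ge k n with h | h
      · have h1 : q ^ (k+1+1) * q ^ (n - (k+1)) * qChoose q n (k+1) =
            q ^ (n - k) * q ^ (k+1) * qChoose q n (k+1) := by
          rw [← pow_add, ← pow_add]
          congr 2
          omega
        linear_combination h1
      · rw [qChoose_eq_zero q (show n < k + 1 by omega)]
        ring

end Aux

lemma twistedPow_succ {A : Type*} [CommRing A] (q y : A) (n : ℕ) :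
    twistedPow q y (n + 1) = twistedPow q y n * (X + C (qInt q n * y)) :=
  Finset.prod_range_succ _ n

lemma key {A : Type*} [CommRing A] (q y : A) (n : ℕ) :
    ∏ i ∈ Finset.range n, (X + C (qInt q (i + 1) * y)) =
      ∑ i ∈ Finset.range (n + 1),
        C (qFact q i * qChoose q n i * y ^ i) * twistedPow q y (n - i) := by
  induction n with
  | zero => simp [twistedPow, qFact, qChoose]
  | succ n ih =>
    rw [Finset.prod_range_succ, ih, Finset.sum_mul]
    have step : ∀ i ∈ Finset.range (n + 1),
        C (qFact q i * qChoose q n i * y ^ i) * twistedPow q y (n - i) *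
          (X + C (qInt q (n + 1) * y)) =
        C (qFact q i * qChoose q n i * y ^ i) * twistedPow q y (n + 1 - i) +
          C (qFact q (i + 1) * (q ^ (n - i) * qChoose q n i) * y ^ (i + 1)) *
            twistedPow q y (n - i) := by
      intro i hi
      rw [Finset.mem_range] at hi
      have h1 : qInt q (n + 1) = qInt q (n - i) + q ^ (n - i) * qInt q (i + 1) := by
        rw [← qInt_add]; congr 1; omega
      have h2 : n + 1 - i = (n - i) + 1 := by omega
      rw [h1, h2, twistedPow_succ, show qFact q (i+1) = qFact q i * qInt q (i+1) from rfl]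
      simp only [map_add, map_mul, map_pow, pow_succ]
      ring
    rw [Finset.sum_congr rfl step, Finset.sum_add_distrib]
    -- now handle RHS
    conv_rhs => rw [Finset.sum_range_succ']
    have hrhs : ∀ i ∈ Finset.range (n + 1),
        C (qFact q (i + 1) * qChoose q (n + 1) (i + 1) * y ^ (i + 1)) *
          twistedPow q y (n + 1 - (i + 1)) =
        C (qFact q (i + 1) * (q ^ (n - i) * qChoose q n i) * y ^ (i + 1)) *
          twistedPow q y (n - i) +
        C (qFact q (i + 1) * qChoose q n (i + 1) * y ^ (i + 1)) * twistedPow q y (n - i) := by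
      intro i hi
      rw [Nat.succ_sub_succ, qChoose_pascal']
      simp only [map_add, map_mul, map_pow]
      ring
    rw [Finset.sum_congr rfl hrhs, Finset.sum_add_distrib]
    have hfirst : ∑ i ∈ Finset.range (n + 1),
        C (qFact q i * qChoose q n i * y ^ i) * twistedPow q y (n + 1 - i) =
        (∑ i ∈ Finset.range (n + 1),
          C (qFact q (i + 1) * qChoose q n (i + 1) * y ^ (i + 1)) * twistedPow q y (n - i)) +
        C (qFact q 0 * qChoose q n 0 * y ^ 0) * twistedPow q y (n + 1 - 0) := by
      have hz : C (qFact q (n+1) * qChoose q n (n+1) * y ^ (n+1)) * twistedPow q y (n + 1 - (n+1)) = 0 := by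
        rw [qChoose_eq_zero q (Nat.lt_succ_self n)]
        simp
      rw [← add_zero (∑ i ∈ Finset.range (n + 1), C (qFact q i * qChoose q n i * y ^ i) * twistedPow q y (n + 1 - i)),
        ← hz, ← Finset.sum_range_succ (fun i => C (qFact q i * qChoose q n i * y ^ i) * twistedPow q y (n + 1 - i)),
        Finset.sum_range_succ']
      congr 1
      apply Finset.sum_congr rfl
      intro i _
      rw [Nat.succ_sub_succ]
    rw [hfirst]
    simp [qFact, qChoose_zero_right]
    ring


lemma qInt_fixed {R A : Type*} [CommRing R] [CommRing A] [Algebra R A]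
    (q : R) (σA : A →ₐ[R] A) (n : ℕ) :
    σA (qInt (algebraMap R A q) n) = qInt (algebraMap R A q) n := by
  simp [qInt, map_sum, map_pow]

/-- Let `σ` be the `σ_A`-semilinear ring endomorphism of `A[ξ]` with `σ(ξ) = ξ + y`, where
`σ_A(y) = qy`. Then `σ(ξ^{(n)}) = Σ_{i=0}^{n} (i)_q! (n choose i)_q y^i ξ^{(n−i)}`. -/
theorem statement9 {R A : Type*} [CommRing R] [CommRing A] [Algebra R A]
    (q : R) (σA : A →ₐ[R] A) (y : A) (hy : σA y = algebraMap R A q * y)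
    (σ : Polynomial A → Polynomial A)
    (hadd : ∀ f g : Polynomial A, σ (f + g) = σ f + σ g)
    (hmul : ∀ f g : Polynomial A, σ (f * g) = σ f * σ g)
    (hC : ∀ a : A, σ (Polynomial.C a) = Polynomial.C (σA a))
    (hX : σ Polynomial.X = Polynomial.X + Polynomial.C y) :
    ∀ n : ℕ, σ (twistedPow (algebraMap R A q) y n) =
      ∑ i ∈ Finset.range (n + 1),
        Polynomial.C (qFact (algebraMap R A q) i * qChoose (algebraMap R A q) n i * y ^ i) *
          twistedPow (algebraMap R A q) y (n - i) := by
  intro n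
  set qa := algebraMap R A q with hqa
  have hσ : σ (twistedPow qa y n) =
      ∏ i ∈ Finset.range n, (X + C (qInt qa (i + 1) * y)) := by
    induction n with
    | zero =>
      have : twistedPow qa y 0 = C 1 := by simp [twistedPow]
      rw [this, hC]
      simp
    | succ n ih =>
      rw [twistedPow_succ, hmul, ih, Finset.prod_range_succ, hadd, hX, hC]
      congr 1
      rw [map_mul, hy, qInt_fixed, qInt_succ]
      simp only [map_add, map_mul, map_one]
      ring
  rw [hσ, key]
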